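/- arXiv:2212.05323 — 2 statements merged into one kernel-verified Lean document; each statement's English description precedes it below -/
import Mathlib

section
/- For every natural number p, one has h(m_p)^40 < m_p^19, where m_p = 1287 · 429^(12p+1); in particular h(m_p) < m_p^(19/40) for all p, and the ratio h(m_p)/m_p^(19/40) tends to 0 as p → ∞, i.e. h(m_p) ∈ o(m_p^(19/40)). -/
/-!
Since `m_p = 3^(12p+3) · 11^(12p+2) · 13^(12p+2)`, the largest prime power dividing it is
`13^(12p+2)`. Cancelling the common power of `13`, the inequality `(13^(12p+2) · 2^p)^40 < m_p^19`
reduces to `(13^252 · 2^40)^p · 13^42 < 33^(228p) · 3^57 · 11^38`, which holds because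
`13^252 · 2^40 ≤ 33^228`. This gives `h(m_p) < m_p^(19/40)` with a spare factor `2^p`, so the
ratio `h(m_p) / m_p^(19/40)` is at most `2^(-p)`.
-/

open Filter

/-- `hpp m` is the largest prime power dividing `m`:
the maximum over primes `p` dividing `m` of `p ^ (ν_p m)`, with the convention `hpp 1 = 1`. -/
def hpp (m : ℕ) : ℕ := max 1 (m.primeFactors.sup fun p => p ^ m.factorization p)

/-- The degrees `m_p = 1287·429^(12p+1)`. -/
def mp (p : ℕ) : ℕ := 1287 * 429 ^ (12 * p + 1)

lemma hpp_eq_of_forall_le {m q : ℕ} (hq : q ∈ m.primeFactors)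
    (hmax : ∀ r ∈ m.primeFactors, r ^ m.factorization r ≤ q ^ m.factorization q) :
    hpp m = q ^ m.factorization q := by
  have hsup : (m.primeFactors.sup fun r => r ^ m.factorization r) = q ^ m.factorization q :=
    le_antisymm (Finset.sup_le hmax) (Finset.le_sup (f := fun r => r ^ m.factorization r) hq)
  rw [hpp, hsup]
  exact max_eq_right (Nat.one_le_pow _ _ (Nat.prime_of_mem_primeFactors hq).pos)

lemma lt_rpow_div_of_pow_lt {a b : ℝ} (ha : 0 ≤ a) (hb : 0 ≤ b) {k n : ℕ} (hn : n ≠ 0)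
    (h : a ^ n < b ^ k) : a < b ^ ((k : ℝ) / n) := by
  rwa [div_eq_mul_inv, Real.rpow_mul hb, Real.rpow_natCast,
    Real.lt_rpow_inv_iff_of_pos ha (by positivity) (by positivity), Real.rpow_natCast]

lemma mp_eq (p : ℕ) : mp p = 3 ^ (12 * p + 3) * 11 ^ (12 * p + 2) * 13 ^ (12 * p + 2) := by
  rw [mp, show 12 * p + 3 = (12 * p + 1) + 2 by ring, show 12 * p + 2 = (12 * p + 1) + 1 by ring]
  simp only [pow_succ, show (429 : ℕ) = 3 * 11 * 13 by norm_num, mul_pow]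
  ring

lemma primeFactors_mp (p : ℕ) : (mp p).primeFactors = {3, 11, 13} := by
  rw [mp_eq, Nat.primeFactors_mul (by positivity) (by positivity),
    Nat.primeFactors_mul (by positivity) (by positivity), Nat.primeFactors_pow _ (by omega),
    Nat.primeFactors_pow _ (by omega), Nat.primeFactors_pow _ (by omega),
    Nat.prime_three.primeFactors, (by norm_num : Nat.Prime 11).primeFactors,
    (by norm_num : Nat.Prime 13).primeFactors]
  rfl

lemma factorization_mp (p : ℕ) :
    (mp p).factorization =
      Finsupp.single 3 (12 * p + 3) + Finsupp.single 11 (12 * p + 2) +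
        Finsupp.single 13 (12 * p + 2) := by
  rw [mp_eq, Nat.factorization_mul (by positivity) (by positivity),
    Nat.factorization_mul (by positivity) (by positivity), Nat.prime_three.factorization_pow,
    (by norm_num : Nat.Prime 11).factorization_pow, (by norm_num : Nat.Prime 13).factorization_pow]

lemma hpp_mp (p : ℕ) : hpp (mp p) = 13 ^ (12 * p + 2) := by
  have h3 : (mp p).factorization 3 = 12 * p + 3 := by simp [factorization_mp]
  have h11 : (mp p).factorization 11 = 12 * p + 2 := by simp [factorization_mp]
  have h13 : (mp p).factorization 13 = 12 * p + 2 := by simp [factorization_mp]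
  rw [← h13]
  refine hpp_eq_of_forall_le (by simp [primeFactors_mp]) fun r hr => ?_
  simp only [primeFactors_mp, Finset.mem_insert, Finset.mem_singleton] at hr
  rcases hr with rfl | rfl | rfl
  · calc 3 ^ (mp p).factorization 3 = 3 ^ (12 * p) * 3 ^ 3 := by rw [h3, pow_add]
      _ ≤ 13 ^ (12 * p) * 13 ^ 2 :=
        Nat.mul_le_mul (Nat.pow_le_pow_left (by norm_num) _) (by norm_num)
      _ = 13 ^ (mp p).factorization 13 := by rw [h13, pow_add]
  · exact h11 ▸ h13 ▸ Nat.pow_le_pow_left (by norm_num) _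
  · exact le_rfl

lemma hpp_mp_mul_two_pow_pow_lt (p : ℕ) : (hpp (mp p) * 2 ^ p) ^ 40 < mp p ^ 19 := by
  have lhs :
      (hpp (mp p) * 2 ^ p) ^ 40 = 13 ^ (228 * p + 38) * ((13 ^ 252 * 2 ^ 40) ^ p * 13 ^ 42) := by
    rw [hpp_mp]; simp only [mul_pow, ← pow_mul]; ring
  have rhs : mp p ^ 19 = 13 ^ (228 * p + 38) * ((33 ^ 228) ^ p * (3 ^ 57 * 11 ^ 38)) := by
    rw [mp_eq, show (33 : ℕ) = 3 * 11 by norm_num]; simp only [mul_pow, ← pow_mul]; ring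
  rw [lhs, rhs]
  gcongr ?_ * ?_
  exact Nat.mul_lt_mul_of_le_of_lt (Nat.pow_le_pow_left (by norm_num) p) (by norm_num)
    (by positivity)

/-- `h(m_p)^40 < m_p^19` for all `p`; in particular `h(m_p) < m_p^(19/40)`,
and `h(m_p)/m_p^(19/40) → 0` as `p → ∞`, i.e. `h(m_p) ∈ o(m_p^(19/40))`. -/
theorem hpp_mp_littleO :
    (∀ p : ℕ, (hpp (mp p)) ^ 40 < (mp p) ^ 19) ∧
      (∀ p : ℕ, (hpp (mp p) : ℝ) < (mp p : ℝ) ^ ((19 : ℝ) / 40)) ∧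
      Tendsto (fun p : ℕ => (hpp (mp p) : ℝ) / (mp p : ℝ) ^ ((19 : ℝ) / 40))
        atTop (nhds 0) := by
  have hreal (p : ℕ) : (hpp (mp p) : ℝ) * 2 ^ p < (mp p : ℝ) ^ ((19 : ℝ) / 40) := by
    refine lt_rpow_div_of_pow_lt (by positivity) (by positivity) (by norm_num) ?_
    exact_mod_cast hpp_mp_mul_two_pow_pow_lt p
  refine ⟨fun p => lt_of_le_of_lt ?_ (hpp_mp_mul_two_pow_pow_lt p), fun p => ?_, ?_⟩
  · exact Nat.pow_le_pow_left (Nat.le_mul_of_pos_right _ (by positivity)) _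
  · exact lt_of_le_of_lt (le_mul_of_one_le_right (by positivity) (one_le_pow₀ one_le_two))
      (hreal p)
  · have hbound (p : ℕ) :
        (hpp (mp p) : ℝ) / (mp p : ℝ) ^ ((19 : ℝ) / 40) ≤ (1 / 2 : ℝ) ^ p := by
      have hM : (0 : ℝ) < (mp p : ℝ) ^ ((19 : ℝ) / 40) :=
        Real.rpow_pos_of_pos (Nat.cast_pos.mpr (by unfold mp; positivity)) _
      rw [one_div_pow, div_le_div_iff₀ hM (by positivity), one_mul]
      exact (hreal p).le
    exact squeeze_zero (fun p => by positivity) hbound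
      (tendsto_pow_atTop_nhds_zero_of_lt_one (by norm_num) (by norm_num))
end

section
/- There exist infinitely many odd positive integers m such that neither m nor m + 2 is a prime power and S(m) < VZ(m). -/
/-- The Viro–Zvonilov bound. -/
def VZ (m : ℕ) : ℚ :=
  ((m : ℚ) - 3) ^ 2 / 4 + ((m : ℚ) ^ 2 - (hpp m : ℚ) ^ 2) / (4 * (hpp m : ℚ) ^ 2)

/-- The bound of the paper's main theorem. -/
def S (m : ℕ) : ℚ := ((m : ℚ) - 1) ^ 2 / 4

/-! `S m < VZ m` amounts to `hpp m ^ 2 * (4 * m - 7) < m ^ 2`, so it holds once `4 * hpp m ^ 2 ≤ m`.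
For `m = 105 ^ n` we have `hpp m ≤ 7 ^ n` and `4 * 49 ^ n ≤ 105 ^ n` when `n ≥ 2`. Such `m` is
divisible by `3` and `5`, and for `n ≡ 54 (mod 80)` the number `m + 2` is divisible by `11` and
`17`, so neither is a prime power. -/

theorem one_le_hpp (m : ℕ) : 1 ≤ hpp m := le_max_left _ _

theorem ordProj_le_hpp {m p : ℕ} (hp : p ∈ m.primeFactors) : p ^ m.factorization p ≤ hpp m :=
  le_max_of_le_right (Finset.le_sup (f := fun p => p ^ m.factorization p) hp)

theorem hpp_pow_le (r n : ℕ) : hpp (r ^ n) ≤ hpp r ^ n := by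
  refine max_le (Nat.one_le_pow _ _ (one_le_hpp r)) (Finset.sup_le fun p hp => ?_)
  have hn : n ≠ 0 := by rintro rfl; simp at hp
  rw [Nat.primeFactors_pow r hn] at hp
  calc p ^ (r ^ n).factorization p = (p ^ r.factorization p) ^ n := by
        rw [Nat.factorization_pow, Finsupp.smul_apply, smul_eq_mul, ← pow_mul, mul_comm]
    _ ≤ hpp r ^ n := Nat.pow_le_pow_left (ordProj_le_hpp hp) n

theorem hpp_105 : hpp 105 = 7 := by
  simp [hpp, ← Nat.toFinset_factors, ← Nat.primeFactorsList_count_eq]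

theorem S_lt_VZ_iff (m : ℕ) : S m < VZ m ↔ (hpp m : ℚ) ^ 2 * (4 * m - 7) < (m : ℚ) ^ 2 := by
  have hh : (0 : ℚ) < hpp m := by exact_mod_cast one_le_hpp m
  have hdiff :
      VZ m - S m = ((m : ℚ) ^ 2 - (hpp m : ℚ) ^ 2 * (4 * m - 7)) / (4 * (hpp m : ℚ) ^ 2) := by
    rw [VZ, S]; field_simp [hh.ne']; ring
  rw [← sub_pos, hdiff, div_pos_iff_of_pos_right (by positivity), sub_pos]

theorem S_lt_VZ_of_four_mul_hpp_sq_le {m : ℕ} (h : 4 * hpp m ^ 2 ≤ m) : S m < VZ m := by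
  rw [S_lt_VZ_iff]
  have hh : (1 : ℚ) ≤ (hpp m : ℚ) := by exact_mod_cast one_le_hpp m
  have hm : 4 * (hpp m : ℚ) ^ 2 ≤ m := by exact_mod_cast h
  nlinarith

theorem not_isPrimePow_of_dvd_of_dvd {n p q : ℕ} (hp : p.Prime) (hq : q.Prime) (hpq : p ≠ q)
    (hpn : p ∣ n) (hqn : q ∣ n) : ¬ IsPrimePow n := by
  rw [isPrimePow_iff_unique_prime_dvd]
  rintro ⟨r, -, hr⟩
  exact hpq ((hr p ⟨hp, hpn⟩).trans (hr q ⟨hq, hqn⟩).symm)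

theorem four_mul_sq_seven_pow_le {n : ℕ} (hn : 2 ≤ n) : 4 * (7 ^ n) ^ 2 ≤ 105 ^ n := by
  obtain ⟨k, rfl⟩ := Nat.exists_eq_add_of_le' hn
  calc 4 * (7 ^ (k + 2)) ^ 2 = (7 ^ 2) ^ k * 9604 := by rw [← pow_mul, ← pow_mul]; ring
    _ ≤ 105 ^ k * 11025 := Nat.mul_le_mul (Nat.pow_le_pow_left (by norm_num) k) (by norm_num)
    _ = 105 ^ (k + 2) := by ring

/-- `105` has order `10` modulo `11` and `16` modulo `17`, and `105 ^ 4 ≡ -2 (mod 11)`,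
`105 ^ 6 ≡ -2 (mod 17)`; this pins the exponent down to `54 (mod 80)`. -/
theorem dvd_105_pow_add_two (k : ℕ) : 11 * 17 ∣ 105 ^ (54 + 80 * k) + 2 := by
  have hperiod : 105 ^ 80 ≡ 1 [MOD 11 * 17] := by decide
  have h : 105 ^ (54 + 80 * k) + 2 ≡ 105 ^ 54 * 1 ^ k + 2 [MOD 11 * 17] := by
    rw [pow_add, pow_mul]
    exact ((Nat.ModEq.refl _).mul (hperiod.pow k)).add_right 2
  rw [one_pow, mul_one] at h
  exact Nat.modEq_zero_iff_dvd.mp (h.trans (by decide))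

/-- There are infinitely many odd positive integers `m` such that neither `m` nor `m + 2`
is a prime power and `S m < VZ m`. -/
theorem infinite_odd_S_lt_VZ :
    {m : ℕ | Odd m ∧ 0 < m ∧ ¬ IsPrimePow m ∧ ¬ IsPrimePow (m + 2) ∧ S m < VZ m}.Infinite := by
  have hinj : Function.Injective fun k : ℕ => 105 ^ (54 + 80 * k) :=
    (Nat.pow_right_injective (by norm_num)).comp fun a b h => by omega
  refine Set.infinite_of_injective_forall_mem hinj fun k => ?_
  have hdvd : 11 * 17 ∣ 105 ^ (54 + 80 * k) + 2 := dvd_105_pow_add_two k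
  refine ⟨Odd.pow (by decide), by positivity, ?_, ?_, S_lt_VZ_of_four_mul_hpp_sq_le ?_⟩
  · exact not_isPrimePow_of_dvd_of_dvd Nat.prime_three Nat.prime_five (by norm_num)
      (dvd_pow (by norm_num) (by omega)) (dvd_pow (by norm_num) (by omega))
  · exact not_isPrimePow_of_dvd_of_dvd (by norm_num : Nat.Prime 11) (by norm_num : Nat.Prime 17)
      (by norm_num) ((Dvd.intro _ rfl).trans hdvd) ((Dvd.intro_left _ rfl).trans hdvd)
  · calc 4 * hpp (105 ^ (54 + 80 * k)) ^ 2 ≤ 4 * (7 ^ (54 + 80 * k)) ^ 2 := by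
          gcongr; simpa only [hpp_105] using hpp_pow_le 105 (54 + 80 * k)
      _ ≤ 105 ^ (54 + 80 * k) := four_mul_sq_seven_pow_le (by omega)
end
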